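/- Let T be a complex 2×3×2 tensor whose three frontal slices are the 2×2 complex matrices [[A₁, A₂],[A₃, A₄]], [[B₁, B₂],[B₃, B₄]], and [[C₁, C₂],[C₃, C₄]]. Suppose the two 3×3 complex matrices M = [[A₂, A₃, A₄],[B₂, B₃, B₄],[C₂, C₃, C₄]] and N = [[A₁, A₂, A₄],[B₁, B₂, B₄],[C₁, C₂, C₄]] are invertible (have nonzero determinant). Then T has rank at most 3, i.e. T is a sum of 3 simple tensors over ℂ. -/
import Mathlib


/-- An `n₁ × n₂ × n₃` complex tensor has rank at most `r` if it is a sum of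
`r` simple tensors. -/
def HasRankLE {n₁ n₂ n₃ : ℕ} (r : ℕ) (T : Fin n₁ → Fin n₂ → Fin n₃ → ℂ) : Prop :=
  ∃ (a : Fin r → Fin n₁ → ℂ) (b : Fin r → Fin n₂ → ℂ) (c : Fin r → Fin n₃ → ℂ),
    ∀ i j k, T i j k = ∑ l : Fin r, a l i * b l j * c l k

/-- The frontal slices of `T` are `A = [[A₁,A₂],[A₃,A₄]]` (for `j = 0`),
`B` (for `j = 1`) and `C` (for `j = 2`), so e.g. `A₁ = T 0 0 0`, `A₂ = T 0 0 1`,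
`A₃ = T 1 0 0`, `A₄ = T 1 0 1`. -/
theorem rank_le_three_232_complex (T : Fin 2 → Fin 3 → Fin 2 → ℂ)
    (hM : (!![T 0 0 1, T 1 0 0, T 1 0 1;
              T 0 1 1, T 1 1 0, T 1 1 1;
              T 0 2 1, T 1 2 0, T 1 2 1]).det ≠ 0)
    (hN : (!![T 0 0 0, T 0 0 1, T 1 0 1;
              T 0 1 0, T 0 1 1, T 1 1 1;
              T 0 2 0, T 0 2 1, T 1 2 1]).det ≠ 0) :
    HasRankLE 3 T := by
  clear hN
  set M : Matrix (Fin 3) (Fin 3) ℂ :=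
    !![T 0 0 1, T 1 0 0, T 1 0 1;
       T 0 1 1, T 1 1 0, T 1 1 1;
       T 0 2 1, T 1 2 0, T 1 2 1] with hMdef
  have hu : IsUnit M.det := isUnit_iff_ne_zero.mpr hM
  set w : Fin 3 → ℂ := ![T 0 0 0, T 0 1 0, T 0 2 0] with hw
  set v : Fin 3 → ℂ := M⁻¹.mulVec w with hv
  have hMv : M.mulVec v = w := by
    rw [hv, Matrix.mulVec_mulVec, Matrix.mul_nonsing_inv _ hu, Matrix.one_mulVec]
  set α := v 0; set β := v 1; set γ := v 2
  have key : ∀ j : Fin 3, T 0 j 0 = T 0 j 1 * α + T 1 j 0 * β + T 1 j 1 * γ := by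
    intro j
    have := congrFun hMv j
    fin_cases j <;>
      simpa [Matrix.mulVec, dotProduct, Fin.sum_univ_three, hMdef, hw] using this.symm
  refine ⟨![![1, 0], ![β, 1], ![β + γ + α * β, 1]],
          fun l j => ![T 0 j 1 - (β + γ + α * β) * T 1 j 1,
                       T 1 j 0 - (α + 1) * T 1 j 1,
                       T 1 j 1] l,
          ![![α, 1], ![1, 0], ![α + 1, 1]], ?_⟩
  intro i j k
  fin_cases i <;> fin_cases k <;>
    simp only [Fin.sum_univ_three, Fin.mk_zero, Fin.mk_one, Matrix.cons_val_zero,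
      Matrix.cons_val_one, Matrix.head_cons, Matrix.cons_val_two, Matrix.tail_cons] <;>
    [skip; ring; ring; ring]
  linear_combination key j
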